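/- For every odd n ≥ 5, the number of equivalence classes under ≈ of two-layer comparator networks on n channels with first layer F_n satisfies |R(G_n)| = |R(G_{n−1})| + 2·|R(G_{n−2})|. -/

import Mathlib

/-!
An isomorphism between the graphs of two-layer networks, when every second-layer comparator takes
an input from the first layer, is a pair of bijections of the layers preserving which output of
which first-layer comparator feeds which second-layer comparator. For odd `n`, channel `n - 1` is
the only one not touched by `F_n`. A second layer `L` either leaves it unused, and then `[F_n, L]`
has the graph of a network on `n - 1` channels, or contains a comparator `(v, n - 1)`. That
comparator is the only one with a single input from `F_n`, so it and its input, the pair of `F_n`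
containing `v`, are determined by the graph; deleting them leaves the graph of a network on
`n - 2` channels in which the partner of `v` is the free channel. The label of the edge between
the two deleted comparators (whether `v` is the min or the max output of its pair) is also an
invariant, and every network on `n - 2` channels arises with both labels. Hence
`R(G_n) ≃ R(G_{n-1}) ⊕ Bool × R(G_{n-2})`.
-/

namespace SN

open scoped Classical

/-- A comparator on `n` channels: a pair of channels. -/
abbrev Comp (n : ℕ) := Fin n × Fin n

/-- A layer is a finite set of comparators. -/
abbrev Layer (n : ℕ) := Finset (Comp n)

/-- A comparator network is a sequence (list) of layers; its depth is the length. -/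
abbrev Net (n : ℕ) := List (Layer n)

/-- Each channel is used by at most one comparator of the layer. -/
def NoOverlap {n : ℕ} (L : Layer n) : Prop :=
  ∀ c ∈ L, ∀ c' ∈ L, c ≠ c' →
    c.1 ≠ c'.1 ∧ c.1 ≠ c'.2 ∧ c.2 ≠ c'.1 ∧ c.2 ≠ c'.2

/-- A (standard) layer: comparators `(i,j)` with `i < j`, channels pairwise disjoint. -/
def IsLayer {n : ℕ} (L : Layer n) : Prop :=
  (∀ c ∈ L, c.1 < c.2) ∧ NoOverlap L

/-- A generalized layer: comparators `(i,j)` with `i ≠ j` allowed in any order. -/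
def IsGenLayer {n : ℕ} (L : Layer n) : Prop :=
  (∀ c ∈ L, c.1 ≠ c.2) ∧ NoOverlap L

def IsNet {n : ℕ} (C : Net n) : Prop := ∀ L ∈ C, IsLayer L

def IsGenNet {n : ℕ} (C : Net n) : Prop := ∀ L ∈ C, IsGenLayer L

/-- Apply one layer to a Boolean vector: a comparator `(i,j)` puts the min
(`&&`) on channel `i` and the max (`||`) on channel `j`. -/
noncomputable def applyLayer {n : ℕ} (L : Layer n) (x : Fin n → Bool) : Fin n → Bool :=
  fun k =>
    if h1 : ∃ c ∈ L, c.1 = k then x h1.choose.1 && x h1.choose.2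
    else if h2 : ∃ c ∈ L, c.2 = k then x h2.choose.1 || x h2.choose.2
    else x k

/-- Run a comparator network on a Boolean input (layers applied in sequence). -/
noncomputable def run {n : ℕ} (C : Net n) (x : Fin n → Bool) : Fin n → Bool :=
  C.foldl (fun y L => applyLayer L y) x

/-- Ascendingly sorted Boolean vector. -/
def BSorted {n : ℕ} (x : Fin n → Bool) : Prop :=
  ∀ i j : Fin n, i ≤ j → x i ≤ x j

/-- A sorting network: a comparator network sorting every Boolean input. -/
def IsSortingNet {n : ℕ} (C : Net n) : Prop :=
  IsNet C ∧ ∀ x : Fin n → Bool, BSorted (run C x)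

/-- The set of outputs of a network on all Boolean inputs. -/
def outputs {n : ℕ} (C : Net n) : Set (Fin n → Bool) := Set.range (run C)

/-- Apply one layer to a vector of naturals. -/
noncomputable def applyLayerN {n : ℕ} (L : Layer n) (x : Fin n → ℕ) : Fin n → ℕ :=
  fun k =>
    if h1 : ∃ c ∈ L, c.1 = k then min (x h1.choose.1) (x h1.choose.2)
    else if h2 : ∃ c ∈ L, c.2 = k then max (x h2.choose.1) (x h2.choose.2)
    else x k

noncomputable def runN {n : ℕ} (C : Net n) (x : Fin n → ℕ) : Fin n → ℕ :=
  C.foldl (fun y L => applyLayerN L y) x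

def NSorted {n : ℕ} (x : Fin n → ℕ) : Prop :=
  ∀ i j : Fin n, i ≤ j → x i ≤ x j

/-- Permute the coordinates of a Boolean vector by `π` (channel `k`'s value
moves to channel `π k`). -/
def permVec {n : ℕ} (π : Equiv.Perm (Fin n)) (x : Fin n → Bool) : Fin n → Bool :=
  fun i => x (π.symm i)

/-- The image of a set of Boolean vectors under coordinate permutation by `π`. -/
def permSet {n : ℕ} (π : Equiv.Perm (Fin n)) (X : Set (Fin n → Bool)) :
    Set (Fin n → Bool) :=
  permVec π '' X

/-- The image `π(L)` of a layer under a permutation of channels. -/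
def permLayer {n : ℕ} (π : Equiv.Perm (Fin n)) (L : Layer n) : Layer n :=
  L.image fun c => (π c.1, π c.2)

/-- Channel `i` is used by some comparator of the layer `L`. -/
def usedIn {n : ℕ} (L : Layer n) (i : Fin n) : Prop := ∃ c ∈ L, c.1 = i ∨ c.2 = i

/-- Channels `i` and `j` are joined by a comparator of `L`. -/
def Joined {n : ℕ} (L : Layer n) (i j : Fin n) : Prop := (i, j) ∈ L ∨ (j, i) ∈ L

/-- `i` is the smaller channel of some comparator of `L` (a min-channel). -/
def MinChan {n : ℕ} (L : Layer n) (i : Fin n) : Prop := ∃ c ∈ L, c.1 = i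

/-- `i` is the larger channel of some comparator of `L` (a max-channel). -/
def MaxChan {n : ℕ} (L : Layer n) (i : Fin n) : Prop := ∃ c ∈ L, c.2 = i

/-- A two-layer network `[L1, L2]` is redundant if some comparator can be removed
so that the outputs of the result are a permutation of the original outputs. -/
def Redundant {n : ℕ} (L1 L2 : Layer n) : Prop :=
  ∃ π : Equiv.Perm (Fin n),
    (∃ c ∈ L1, outputs [L1.erase c, L2] = permSet π (outputs [L1, L2])) ∨
    (∃ c ∈ L2, outputs [L1, L2.erase c] = permSet π (outputs [L1, L2]))

/-- A two-layer network `[L1, L2]` is saturated if it is non-redundant and no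
comparator on two channels unused in the second layer can be added to the second
layer so as to make the output set a proper subset of a permutation of the
original output set. -/
def Saturated {n : ℕ} (L1 L2 : Layer n) : Prop :=
  ¬ Redundant L1 L2 ∧
  ¬ ∃ (c : Comp n) (π : Equiv.Perm (Fin n)),
      c.1 < c.2 ∧ ¬ usedIn L2 c.1 ∧ ¬ usedIn L2 c.2 ∧
      outputs [L1, insert c L2] ⊂ permSet π (outputs [L1, L2])

/-- Vertices of the graph representation of `C`: the comparators of `C`,
tagged with the index of the layer containing them. -/
def Vertex {n : ℕ} (C : Net n) := {p : ℕ × Comp n // p.2 ∈ C.getD p.1 ∅}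

/-- The channel carrying the min output (`b = false`, label 1) or max output
(`b = true`, label 2) of a comparator. -/
def outChan {n : ℕ} (c : Comp n) (b : Bool) : Fin n := if b then c.2 else c.1

/-- An edge with label `b` (1 for min, 2 for max) from comparator `u` to
comparator `v`: the corresponding output of `u` is an input of `v`, i.e. `v`
is the next comparator on that channel. -/
def Edge {n : ℕ} (C : Net n) (b : Bool) (u v : ℕ × Comp n) : Prop :=
  u.1 < v.1 ∧ (outChan u.2 b = v.2.1 ∨ outChan u.2 b = v.2.2) ∧
  ∀ m, u.1 < m → m < v.1 → ¬ usedIn (C.getD m ∅) (outChan u.2 b)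

/-- The graph representations of `C` and `D` are isomorphic: a bijection of
comparators preserving the labeled edges. -/
def GraphIso {n m : ℕ} (C : Net n) (D : Net m) : Prop :=
  ∃ f : Vertex C ≃ Vertex D,
    ∀ (b : Bool) (u v : Vertex C),
      Edge C b u.val v.val ↔ Edge D b (f u).val (f v).val

/-- The graph representation of `C` is connected. -/
def GraphConnected {n : ℕ} (C : Net n) : Prop :=
  ∀ u v : Vertex C,
    Relation.ReflTransGen
      (fun a b : Vertex C => ∃ ℓ : Bool, Edge C ℓ a.val b.val ∨ Edge C ℓ b.val a.val) u v

/-- Reflection of a comparator: `(i,j) ↦ (n-j+1, n-i+1)` (in 1-based terms). -/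
def reflectComp {n : ℕ} (c : Comp n) : Comp n := (c.2.rev, c.1.rev)

def reflectLayer {n : ℕ} (L : Layer n) : Layer n := L.image reflectComp

/-- Reflection `C^R` of a comparator network. -/
def reflect {n : ℕ} (C : Net n) : Net n := C.map reflectLayer

/-- The first layer `F_n = {(2i-1, 2i) : 1 ≤ i ≤ ⌊n/2⌋}` (0-indexed: `(2i, 2i+1)`). -/
def FLayer (n : ℕ) : Layer n :=
  Finset.univ.filter fun c : Comp n => c.1.val % 2 = 0 ∧ c.2.val = c.1.val + 1

/-- The two-layer networks with first layer `F_n`, parametrized by second layer. -/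
def SecondLayers (n : ℕ) := {L : Layer n // IsLayer L}

/-- The number `|R(G_n)|` of equivalence classes of two-layer networks with
first layer `F_n`, under graph isomorphism `≈`. -/
noncomputable def numClasses (n : ℕ) : ℕ :=
  Nat.card (Quot fun L L' : SecondLayers n =>
    GraphIso ([FLayer n, L.val] : Net n) ([FLayer n, L'.val] : Net n))

/-- Redundant two-layer networks with first layer `F_n`. -/
def RedLayers (n : ℕ) := {L : Layer n // IsLayer L ∧ Redundant (FLayer n) L}

/-- The number of equivalence classes of redundant two-layer networks with
first layer `F_n`, under graph isomorphism `≈`. -/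
noncomputable def numRedClasses (n : ℕ) : ℕ :=
  Nat.card (Quot fun L L' : RedLayers n =>
    GraphIso ([FLayer n, L.val] : Net n) ([FLayer n, L'.val] : Net n))

lemma _root_.Equiv.exists_eq_sumCongr {α β α' β' : Type*} (F : α ⊕ β ≃ α' ⊕ β')
    (h : ∀ x, (F x).isLeft ↔ x.isLeft) :
    ∃ (e : α ≃ α') (e' : β ≃ β'), F = e.sumCongr e' := by
  have hr : ∀ x, (F x).isRight ↔ x.isRight := fun x => by
    simpa only [Sum.not_isLeft] using (h x).not
  refine ⟨Equiv.sumIsLeft.symm.trans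
      ((F.subtypeEquiv fun x => (h x).symm).trans Equiv.sumIsLeft),
    Equiv.sumIsRight.symm.trans
      ((F.subtypeEquiv fun x => (hr x).symm).trans Equiv.sumIsRight), ?_⟩
  ext x
  cases x <;> simp

lemma _root_.Equiv.apply_some_eq_some_removeNone {α β : Type*} (E : Option α ≃ Option β)
    (h : E none = none) (a : α) : E (some a) = some (E.removeNone a) :=
  (Equiv.removeNone_some E (Option.ne_none_iff_exists'.mp
    fun h' => Option.some_ne_none a (E.injective (h'.trans h.symm)))).symm

section TwoLayerGraphs

variable {n m : ℕ}

def Feeds (a c : Comp n) (b : Bool) : Prop := outChan a b = c.1 ∨ outChan a b = c.2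

lemma vertex_twoLayer_cases {A B : Layer n} (v : Vertex ([A, B] : Net n)) :
    (v.val.1 = 0 ∧ v.val.2 ∈ A) ∨ (v.val.1 = 1 ∧ v.val.2 ∈ B) := by
  obtain ⟨⟨k, c⟩, hc⟩ := v
  match k, hc with
  | 0, hc => exact Or.inl ⟨rfl, by simpa using hc⟩
  | 1, hc => exact Or.inr ⟨rfl, by simpa using hc⟩
  | _ + 2, hc => simp [List.getD] at hc

def twoLayerVertexEquiv (A B : Layer n) :
    Vertex ([A, B] : Net n) ≃ {c // c ∈ A} ⊕ {c // c ∈ B} where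
  toFun v := if h : v.val.1 = 0 then
      .inl ⟨v.val.2, (vertex_twoLayer_cases v).elim And.right fun h₁ => by omega⟩
    else .inr ⟨v.val.2, (vertex_twoLayer_cases v).elim (fun h₀ => by omega) And.right⟩
  invFun
    | .inl a => ⟨(0, a.val), by simp⟩
    | .inr c => ⟨(1, c.val), by simp⟩
  left_inv v := by
    rcases vertex_twoLayer_cases v with ⟨h0, _⟩ | ⟨h1, _⟩
    · simp only [h0, dite_true]; exact Subtype.ext (Prod.ext h0.symm rfl)
    · simp only [h1, one_ne_zero, dite_false]; exact Subtype.ext (Prod.ext h1.symm rfl)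
  right_inv x := by cases x <;> simp

def SumFeeds {A B : Layer n} :
    {c // c ∈ A} ⊕ {c // c ∈ B} → {c // c ∈ A} ⊕ {c // c ∈ B} → Bool → Prop
  | .inl a, .inr c, b => Feeds a.val c.val b
  | _, _, _ => False

lemma SumFeeds.isRight {A B : Layer n} {x y : {c // c ∈ A} ⊕ {c // c ∈ B}} {b : Bool}
    (h : SumFeeds x y b) : y.isRight := by
  cases x <;> cases y <;> simp_all [SumFeeds]

lemma edge_twoLayer_iff {A B : Layer n} (b : Bool) (u v : Vertex ([A, B] : Net n)) :
    Edge ([A, B] : Net n) b u.val v.val ↔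
      SumFeeds (twoLayerVertexEquiv A B u) (twoLayerVertexEquiv A B v) b := by
  rcases vertex_twoLayer_cases u with ⟨hu, -⟩ | ⟨hu, -⟩ <;>
    rcases vertex_twoLayer_cases v with ⟨hv, -⟩ | ⟨hv, -⟩ <;>
    simp [twoLayerVertexEquiv, SumFeeds, Edge, Feeds, hu, hv]
  intro _ k hk hk1
  omega

structure FeedIso (A B : Layer n) (A' B' : Layer m) where
  first : {c // c ∈ A} ≃ {c // c ∈ A'}
  second : {c // c ∈ B} ≃ {c // c ∈ B'}
  feeds_iff : ∀ a c b, Feeds a.val c.val b ↔ Feeds (first a).val (second c).val b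

namespace FeedIso

variable {A B : Layer n} {A' B' : Layer m}

def refl (A B : Layer n) : FeedIso A B A B := ⟨Equiv.refl _, Equiv.refl _, fun _ _ _ => Iff.rfl⟩

lemma sumFeeds_iff (t : FeedIso A B A' B') (x y : {c // c ∈ A} ⊕ {c // c ∈ B}) (b : Bool) :
    SumFeeds x y b ↔ SumFeeds (Equiv.sumCongr t.first t.second x)
      (Equiv.sumCongr t.first t.second y) b := by
  cases x <;> cases y <;> simp [SumFeeds, t.feeds_iff]

lemma graphIso (t : FeedIso A B A' B') : GraphIso ([A, B] : Net n) ([A', B'] : Net m) :=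
  ⟨(twoLayerVertexEquiv A B).trans
      ((Equiv.sumCongr t.first t.second).trans (twoLayerVertexEquiv A' B').symm),
    fun b u v => by simp [edge_twoLayer_iff, t.sumFeeds_iff]⟩

end FeedIso

lemma GraphIso.refl (C : Net n) : GraphIso C C := ⟨Equiv.refl _, fun _ _ _ => Iff.rfl⟩

lemma GraphIso.symm {C : Net n} {D : Net m} (h : GraphIso C D) : GraphIso D C := by
  obtain ⟨f, hf⟩ := h
  exact ⟨f.symm, fun b u v => by simpa using (hf b (f.symm u) (f.symm v)).symm⟩

lemma GraphIso.trans {k : ℕ} {C : Net n} {D : Net m} {E : Net k}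
    (h₁ : GraphIso C D) (h₂ : GraphIso D E) : GraphIso C E := by
  obtain ⟨f, hf⟩ := h₁
  obtain ⟨g, hg⟩ := h₂
  exact ⟨f.trans g, fun b u v => (hf b u v).trans (hg b (f u) (f v))⟩

def AllFed (A B : Layer n) : Prop :=
  ∀ c : {c // c ∈ B}, ∃ (a : {c // c ∈ A}) (b : Bool), Feeds a.val c.val b

lemma GraphIso.nonempty_feedIso {A B : Layer n} {A' B' : Layer m} (hB : AllFed A B)
    (hB' : AllFed A' B') (h : GraphIso ([A, B] : Net n) ([A', B'] : Net m)) :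
    Nonempty (FeedIso A B A' B') := by
  obtain ⟨f, hf⟩ := h
  set F := (twoLayerVertexEquiv A B).symm.trans (f.trans (twoLayerVertexEquiv A' B'))
  have hF : ∀ b x y, SumFeeds x y b ↔ SumFeeds (F x) (F y) b := fun b x y => by
    simpa [F, edge_twoLayer_iff] using hf b ((twoLayerVertexEquiv A B).symm x)
      ((twoLayerVertexEquiv A B).symm y)
  have hleft : ∀ x, (F x).isLeft ↔ x.isLeft := by
    rintro (a | c)
    · simp only [Sum.isLeft_inl, iff_true]
      cases hFa : F (.inl a) with
      | inl _ => rfl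
      | inr c' =>
        obtain ⟨a', b, hfeeds⟩ := hB' c'
        have : SumFeeds (F (F.symm (.inl a'))) (F (.inl a)) b := by
          rw [hFa, Equiv.apply_symm_apply]; exact hfeeds
        simpa using ((hF b _ _).mpr this).isRight
    · obtain ⟨a, b, hfeeds⟩ := hB c
      simpa using ((hF b (.inl a) (.inr c)).mp hfeeds).isRight
  obtain ⟨e, e', hFe⟩ := F.exists_eq_sumCongr hleft
  exact ⟨⟨e, e', fun a c b => by simpa [hFe, SumFeeds] using hF b (.inl a) (.inr c)⟩⟩

def FedOnce (A : Layer n) (c : Comp n) : Prop :=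
  ∃! p : {a // a ∈ A} × Bool, Feeds p.1.val c p.2

lemma FeedIso.fedOnce_iff {A B : Layer n} {A' B' : Layer m} (t : FeedIso A B A' B')
    (c : {c // c ∈ B}) : FedOnce A c.val ↔ FedOnce A' (t.second c).val :=
  (t.first.prodCongr (Equiv.refl Bool)).existsUnique_congr fun p => t.feeds_iff p.1 c p.2

/-- The feed relation of `[A, B]` when `A = As ∪ {u₀}` and `B = Bs ∪ {v₀}`, with `none`
standing for `u₀` and `v₀`: output `b₀` of `u₀` goes to `v₀` only, and output `!b₀` goes to
the comparators of `Bs` with a single input from `As`, i.e. to the one on the free channel. -/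
def ExtFeeds {As Bs : Layer m} (b₀ : Bool) :
    Option {c // c ∈ As} → Option {c // c ∈ Bs} → Bool → Prop
  | some a, some c, b => Feeds a.val c.val b
  | some _, none, _ => False
  | none, some c, b => b = !b₀ ∧ FedOnce As c.val
  | none, none, b => b = b₀

lemma FeedIso.extFeeds_iff {As Bs As' Bs' : Layer m} (t : FeedIso As Bs As' Bs') (b₀ : Bool)
    (x : Option {c // c ∈ As}) (y : Option {c // c ∈ Bs}) (b : Bool) :
    ExtFeeds b₀ x y b ↔ ExtFeeds b₀ (x.map t.first) (y.map t.second) b := by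
  cases x <;> cases y <;> simp [ExtFeeds, t.feeds_iff, t.fedOnce_iff]

structure Extension (As Bs : Layer m) (A B : Layer n) (b₀ : Bool) where
  first : Option {c // c ∈ As} ≃ {c // c ∈ A}
  second : Option {c // c ∈ Bs} ≃ {c // c ∈ B}
  feeds_iff : ∀ x y b, Feeds (first x).val (second y).val b ↔ ExtFeeds b₀ x y b

namespace Extension

variable {As Bs As' Bs' : Layer m} {A B A' B' : Layer n} {b₀ b₀' : Bool}

lemma fedOnce_iff (e : Extension As Bs A B b₀) (y : Option {c // c ∈ Bs}) :
    FedOnce A (e.second y).val ↔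
      ∃! p : Option {c // c ∈ As} × Bool, ExtFeeds b₀ p.1 y p.2 :=
  (e.first.symm.prodCongr (Equiv.refl Bool)).existsUnique_congr fun p => by
    simpa using e.feeds_iff (e.first.symm p.1) y p.2

lemma fedOnce_second_none (e : Extension As Bs A B b₀) : FedOnce A (e.second none).val := by
  rw [e.fedOnce_iff]
  refine ⟨(none, b₀), rfl, ?_⟩
  rintro ⟨_ | a, b⟩ h
  · exact Prod.ext rfl h
  · exact h.elim

lemma not_fedOnce_second_some (e : Extension As Bs A B b₀) (c : {c // c ∈ Bs})
    (hc : ∃ (a : {c // c ∈ As}) (b : Bool), Feeds a.val c.val b) :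
    ¬ FedOnce A (e.second (some c)).val := by
  rw [e.fedOnce_iff]
  rintro ⟨p, -, hp⟩
  obtain ⟨a, b, hab⟩ := hc
  have hsmall : FedOnce As c.val := by
    refine ⟨(a, b), hab, fun q hq => ?_⟩
    have h := (hp (some q.1, q.2) hq).trans (hp (some a, b) hab).symm
    simp only [Prod.mk.injEq, Option.some.injEq] at h
    exact Prod.ext h.1 h.2
  have h := (hp (none, !b₀) ⟨rfl, hsmall⟩).trans (hp (some a, b) hab).symm
  simp at h

def lift (e : Extension As Bs A B b₀) (e' : Extension As' Bs' A' B' b₀)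
    (t : FeedIso As Bs As' Bs') : FeedIso A B A' B' where
  first := e.first.symm.trans ((Equiv.optionCongr t.first).trans e'.first)
  second := e.second.symm.trans ((Equiv.optionCongr t.second).trans e'.second)
  feeds_iff a c b := by
    obtain ⟨x, rfl⟩ := e.first.surjective a
    obtain ⟨y, rfl⟩ := e.second.surjective c
    simp [e.feeds_iff, e'.feeds_iff, t.extFeeds_iff b₀ x y b]

/-- The added comparators `v₀` and `u₀` are recognisable in the graph: `v₀` is the only
comparator of the second layer with a single input from the first, and `u₀` is its input. -/
lemma descend (e : Extension As Bs A B b₀) (e' : Extension As' Bs' A' B' b₀')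
    (hfed : AllFed As Bs) (t : FeedIso A B A' B') :
    b₀ = b₀' ∧ Nonempty (FeedIso As Bs As' Bs') := by
  set E₁ := e.first.trans (t.first.trans e'.first.symm)
  set E₂ := e.second.trans (t.second.trans e'.second.symm)
  have hE₁ : ∀ x, t.first (e.first x) = e'.first (E₁ x) := by simp [E₁]
  have hE₂ : ∀ y, t.second (e.second y) = e'.second (E₂ y) := by simp [E₂]
  have hfeeds : ∀ x y b, ExtFeeds b₀ x y b ↔ ExtFeeds b₀' (E₁ x) (E₂ y) b := by
    intro x y b
    rw [← e.feeds_iff, t.feeds_iff, hE₁, hE₂, e'.feeds_iff]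
  have hv₀ : E₂ none = none := by
    rw [← Equiv.option_symm_apply_none_iff]
    cases hy : E₂.symm none with
    | none => rfl
    | some c =>
      have hc : E₂ (some c) = none := by rw [← hy, Equiv.apply_symm_apply]
      have h := (t.fedOnce_iff (e.second (some c))).mpr (by
        rw [hE₂, hc]; exact e'.fedOnce_second_none)
      exact absurd h (e.not_fedOnce_second_some c (hfed c))
  have hu₀ : E₁ none = none ∧ b₀ = b₀' := by
    have h := (hfeeds none none b₀).mp rfl
    rw [hv₀] at h
    cases hx : E₁ none with
    | none => rw [hx] at h; exact ⟨rfl, h⟩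
    | some _ => rw [hx] at h; exact h.elim
  refine ⟨hu₀.2, ⟨⟨E₁.removeNone, E₂.removeNone, fun a c b => ?_⟩⟩⟩
  have h := hfeeds (some a) (some c) b
  rwa [E₁.apply_some_eq_some_removeNone hu₀.1, E₂.apply_some_eq_some_removeNone hv₀] at h

end Extension

end TwoLayerGraphs

section Relabel

variable {k l : ℕ}

noncomputable def optionEquivOfBijOn {A : Layer k} {A' : Layer l} (f : Comp k → Comp l)
    {c₀ : Comp l} (hc₀ : c₀ ∈ A') (h : Set.BijOn f A (A'.erase c₀)) :
    Option {c // c ∈ A} ≃ {c // c ∈ A'} :=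
  (Equiv.optionCongr (h.equiv f)).trans ((Finset.subtypeInsertEquivOption
    (Finset.notMem_erase c₀ A')).symm.trans
      (Equiv.subtypeEquivRight fun c => by rw [Finset.insert_erase hc₀]))

@[simp]
lemma optionEquivOfBijOn_none {A : Layer k} {A' : Layer l} (f : Comp k → Comp l) {c₀ : Comp l}
    (hc₀ : c₀ ∈ A') (h : Set.BijOn f A (A'.erase c₀)) :
    (optionEquivOfBijOn f hc₀ h none).val = c₀ := rfl

@[simp]
lemma optionEquivOfBijOn_some {A : Layer k} {A' : Layer l} (f : Comp k → Comp l) {c₀ : Comp l}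
    (hc₀ : c₀ ∈ A') (h : Set.BijOn f A (A'.erase c₀)) (a : {c // c ∈ A}) :
    (optionEquivOfBijOn f hc₀ h (some a)).val = f a.val := rfl

def relabel (f : Fin k → Fin l) (c : Comp k) : Comp l := (f c.1, f c.2)

lemma outChan_relabel (f : Fin k → Fin l) (c : Comp k) (b : Bool) :
    outChan (relabel f c) b = f (outChan c b) := by
  cases b <;> rfl

lemma relabel_injective {f : Fin k → Fin l} (hf : Function.Injective f) :
    Function.Injective (relabel f) := fun _ _ h =>
  Prod.ext (hf (congrArg Prod.fst h)) (hf (congrArg Prod.snd h))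

lemma feeds_relabel_iff {f : Fin k → Fin l} (hf : Function.Injective f) (a c : Comp k)
    (b : Bool) : Feeds (relabel f a) (relabel f c) b ↔ Feeds a c b := by
  cases b <;> simp [Feeds, outChan, relabel, hf.eq_iff]

lemma bijOn_image_relabel {f : Fin k → Fin l} (hf : Function.Injective f) (M : Layer k) :
    Set.BijOn (relabel f) M (M.image (relabel f)) := by
  rw [Finset.coe_image]
  exact (relabel_injective hf).injOn.bijOn_image

lemma isLayer_image_relabel_iff {f : Fin k → Fin l} (hf : StrictMono f) {M : Layer k} :
    IsLayer (M.image (relabel f)) ↔ IsLayer M := by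
  simp only [IsLayer, NoOverlap, Finset.forall_mem_image, ne_eq,
    (relabel_injective hf.injective).eq_iff]
  simp only [relabel, hf.lt_iff_lt, hf.injective.eq_iff]

lemma IsLayer.insert {S : Layer k} (hS : IsLayer S) {c : Comp k} (hc : c.1 < c.2)
    (hdisj : ∀ d ∈ S, c.1 ≠ d.1 ∧ c.1 ≠ d.2 ∧ c.2 ≠ d.1 ∧ c.2 ≠ d.2) :
    IsLayer (insert c S) := by
  refine ⟨fun d hd => ?_, fun d hd d' hd' hne => ?_⟩
  · rcases Finset.mem_insert.mp hd with rfl | hd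
    exacts [hc, hS.1 d hd]
  · rcases Finset.mem_insert.mp hd with rfl | hdS <;>
      rcases Finset.mem_insert.mp hd' with rfl | hdS'
    · exact absurd rfl hne
    · exact hdisj d' hdS'
    · obtain ⟨h₁, h₂, h₃, h₄⟩ := hdisj d hdS
      exact ⟨h₁.symm, h₃.symm, h₂.symm, h₄.symm⟩
    · exact hS.2 d hdS d' hdS' hne

lemma IsLayer.subset {L M : Layer k} (hL : IsLayer L) (hML : M ⊆ L) : IsLayer M :=
  ⟨fun c hc => hL.1 c (hML hc), fun c hc d hd => hL.2 c (hML hc) d (hML hd)⟩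


def sortComp (c : Comp k) : Comp k := if c.1 ≤ c.2 then c else (c.2, c.1)

lemma sortComp_val (c : Comp k) :
    (sortComp c).1.val = min c.1.val c.2.val ∧ (sortComp c).2.val = max c.1.val c.2.val := by
  by_cases h : c.1 ≤ c.2 <;> simp only [sortComp, h, if_true, if_false] <;>
    rw [Fin.le_def] at h <;> constructor <;> omega

lemma feeds_sortComp_iff (a c : Comp k) (b : Bool) : Feeds a (sortComp c) b ↔ Feeds a c b := by
  unfold sortComp
  split_ifs
  exacts [Iff.rfl, or_comm]

lemma sortComp_relabel_disjoint {f : Fin k → Fin l} {M : Layer k} (hM : IsLayer M)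
    {S : Set (Fin k)} (hMS : ∀ c ∈ M, c.1 ∈ S ∧ c.2 ∈ S) (hf : Set.InjOn f S)
    {c d : Comp k} (hc : c ∈ M) (hd : d ∈ M) (hcd : c ≠ d) :
    ∀ x ∈ [(sortComp (relabel f c)).1, (sortComp (relabel f c)).2],
      ∀ y ∈ [(sortComp (relabel f d)).1, (sortComp (relabel f d)).2], x ≠ y := by
  have hfc : ∀ x ∈ [(sortComp (relabel f c)).1, (sortComp (relabel f c)).2],
      x = f c.1 ∨ x = f c.2 := by
    unfold sortComp relabel; split_ifs <;> simp
  have hfd : ∀ y ∈ [(sortComp (relabel f d)).1, (sortComp (relabel f d)).2],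
      y = f d.1 ∨ y = f d.2 := by
    unfold sortComp relabel; split_ifs <;> simp
  obtain ⟨h₁, h₂, h₃, h₄⟩ := hM.2 c hc d hd hcd
  obtain ⟨hc₁, hc₂⟩ := hMS c hc
  obtain ⟨hd₁, hd₂⟩ := hMS d hd
  intro x hx y hy
  rcases hfc x hx with rfl | rfl <;> rcases hfd y hy with rfl | rfl <;> intro h
  exacts [h₁ (hf hc₁ hd₁ h), h₂ (hf hc₁ hd₂ h), h₃ (hf hc₂ hd₁ h),
    h₄ (hf hc₂ hd₂ h)]

lemma isLayer_image_sortComp_relabel {f : Fin k → Fin l} {M : Layer k} (hM : IsLayer M)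
    {S : Set (Fin k)} (hMS : ∀ c ∈ M, c.1 ∈ S ∧ c.2 ∈ S) (hf : Set.InjOn f S) :
    IsLayer (M.image fun c => sortComp (relabel f c)) ∧
      Set.InjOn (fun c => sortComp (relabel f c)) M := by
  have hinj : Set.InjOn (fun c => sortComp (relabel f c)) M := fun c hc d hd h => by
    by_contra hcd
    exact sortComp_relabel_disjoint hM hMS hf hc hd hcd _ (by simp) _ (by simp)
      (congrArg Prod.fst h)
  refine ⟨⟨?_, ?_⟩, hinj⟩
  · simp only [Finset.forall_mem_image]
    intro c hc
    have hne : (f c.1).val ≠ (f c.2).val := fun h =>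
      (hM.1 c hc).ne (hf (hMS c hc).1 (hMS c hc).2 (Fin.ext h))
    have := sortComp_val (relabel f c)
    rw [Fin.lt_def, this.1, this.2]
    show min (f c.1).val (f c.2).val < max (f c.1).val (f c.2).val
    omega
  · simp only [NoOverlap, Finset.forall_mem_image]
    intro c hc d hd hne
    have hcd : c ≠ d := fun h => hne (h ▸ rfl)
    have := sortComp_relabel_disjoint hM hMS hf hc hd hcd
    exact ⟨this _ (by simp) _ (by simp), this _ (by simp) _ (by simp),
      this _ (by simp) _ (by simp), this _ (by simp) _ (by simp)⟩

end Relabel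

section FLayer

variable {k : ℕ}

lemma outChan_val (a : Comp k) (b : Bool) :
    (outChan a b).val = if b then a.2.val else a.1.val := by
  cases b <;> rfl

lemma feeds_iff_val (a c : Comp k) (b : Bool) :
    Feeds a c b ↔ (outChan a b).val = c.1.val ∨ (outChan a b).val = c.2.val := by
  simp only [Feeds, Fin.ext_iff]

lemma mem_FLayer {c : Comp k} : c ∈ FLayer k ↔ c.1.val % 2 = 0 ∧ c.2.val = c.1.val + 1 := by
  simp [FLayer]

lemma outChan_injective_of_mem_FLayer {a a' : Comp k} (ha : a ∈ FLayer k) (ha' : a' ∈ FLayer k)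
    {b b' : Bool} (h : outChan a b = outChan a' b') : a = a' ∧ b = b' := by
  rw [mem_FLayer] at ha ha'
  have hv := congrArg Fin.val h
  rw [outChan_val, outChan_val] at hv
  cases b <;> cases b' <;> simp only [Bool.false_eq_true, ite_false, ite_true] at hv <;>
    first | omega | exact ⟨Prod.ext (Fin.ext (by omega)) (Fin.ext (by omega)), rfl⟩

lemma outChan_lt_of_mem_FLayer (hk : Odd k) {a : Comp k} (ha : a ∈ FLayer k) (b : Bool) :
    (outChan a b).val < k - 1 := by
  rw [mem_FLayer] at ha
  obtain ⟨j, rfl⟩ := hk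
  have := a.2.isLt
  rw [outChan_val]
  split <;> omega

lemma exists_outChan_eq (v : Fin k) (hv : v.val + 1 < k) :
    ∃ (a : {a // a ∈ FLayer k}) (b : Bool), outChan a.val b = v :=
  ⟨⟨(⟨v.val - v.val % 2, by omega⟩, ⟨v.val - v.val % 2 + 1, by omega⟩), mem_FLayer.mpr
    ⟨show (v.val - v.val % 2) % 2 = 0 by omega, rfl⟩⟩, decide (v.val % 2 = 1), Fin.ext <| by
      rw [outChan_val]; by_cases h : v.val % 2 = 1 <;> simp [h] <;> omega⟩

lemma allFed_FLayer {B : Layer k} (hB : IsLayer B) : AllFed (FLayer k) B := fun c => by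
  have h₁ := Fin.lt_def.mp (hB.1 c.val c.property)
  obtain ⟨a, b, hab⟩ := exists_outChan_eq c.val.1 (by have := c.val.2.isLt; omega)
  exact ⟨a, b, Or.inl hab⟩

/-- For odd `k`, channel `k - 1` is the only one not touched by `F_k`. -/
lemma fedOnce_FLayer_iff (hk : Odd k) {c : Comp k} (hc : c.1 < c.2) :
    FedOnce (FLayer k) c ↔ c.2.val = k - 1 := by
  rw [Fin.lt_def] at hc
  have h₂ := c.2.isLt
  obtain ⟨a, b, hab⟩ := exists_outChan_eq c.1 (by omega)
  constructor
  · rintro ⟨p, -, hp⟩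
    by_contra hlast
    obtain ⟨a', b', hab'⟩ := exists_outChan_eq c.2 (by omega)
    have h := (hp (a, b) (Or.inl hab)).trans (hp (a', b') (Or.inr hab')).symm
    simp only [Prod.mk.injEq] at h
    rw [h.1, h.2, hab'] at hab
    exact absurd hab (by rw [Fin.ext_iff]; omega)
  · intro hlast
    refine ⟨(a, b), Or.inl hab, fun q hq => ?_⟩
    have hq₁ : outChan q.1.val q.2 = outChan a.val b := by
      rcases hq with hq | hq
      · exact hq.trans hab.symm
      · have := outChan_lt_of_mem_FLayer hk q.1.property q.2
        rw [hq] at this; omega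
    obtain ⟨h₁, h₂⟩ := outChan_injective_of_mem_FLayer q.1.property a.property hq₁
    exact Prod.ext (Subtype.ext h₁) h₂

end FLayer

section LastChannelUnused

variable {n : ℕ}

def castLayer (M : Layer (n - 1)) : Layer n := M.image (relabel (Fin.castLE (Nat.sub_le n 1)))

lemma isLayer_castLayer {M : Layer (n - 1)} (hM : IsLayer M) : IsLayer (castLayer M) :=
  (isLayer_image_relabel_iff (Fin.strictMono_castLE _)).mpr hM

lemma bijOn_castLE_FLayer (hn : Odd n) :
    Set.BijOn (relabel (Fin.castLE (Nat.sub_le n 1))) (FLayer (n - 1)) (FLayer n) := by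
  refine ⟨fun a ha => ?_, (relabel_injective (Fin.castLE_injective _)).injOn, fun c hc => ?_⟩
  · simpa [mem_FLayer, relabel] using ha
  · rw [Finset.mem_coe, mem_FLayer] at hc
    obtain ⟨j, rfl⟩ := hn
    have := c.2.isLt
    refine ⟨(⟨c.1, by omega⟩, ⟨c.2, by omega⟩), mem_FLayer.mpr hc, rfl⟩

noncomputable def feedIsoCastLayer (hn : Odd n) (M : Layer (n - 1)) :
    FeedIso (FLayer (n - 1)) M (FLayer n) (castLayer M) where
  first := (bijOn_castLE_FLayer hn).equiv _
  second := (bijOn_image_relabel (Fin.castLE_injective _) M).equiv _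
  feeds_iff a c b := (feeds_relabel_iff (Fin.castLE_injective _) a.val c.val b).symm

lemma exists_castLayer_eq {L : Layer n} (hL : IsLayer L) (hlast : ∀ c ∈ L, c.2.val ≠ n - 1) :
    ∃ M, IsLayer M ∧ castLayer M = L := by
  set M := Finset.univ.filter fun d => relabel (Fin.castLE (Nat.sub_le n 1)) d ∈ L
  have hM : castLayer M = L := by
    ext c
    simp only [castLayer, M, Finset.mem_image, Finset.mem_filter, Finset.mem_univ, true_and]
    refine ⟨fun ⟨d, hd, hdc⟩ => hdc ▸ hd, fun hc => ?_⟩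
    have h₁ := Fin.lt_def.mp (hL.1 c hc)
    have h₂ := hlast c hc
    have := c.2.isLt
    exact ⟨(⟨c.1, by omega⟩, ⟨c.2, by omega⟩), hc, rfl⟩
  exact ⟨M, (isLayer_image_relabel_iff (Fin.strictMono_castLE _)).mp (hM ▸ hL), hM⟩

end LastChannelUnused

section Psi

variable {n : ℕ} (h3 : 3 ≤ n)

def lastPair : Comp n := (⟨n - 3, by omega⟩, ⟨n - 2, by omega⟩)

def lastChan : Fin n := ⟨n - 1, by omega⟩

def psiChan (b₀ : Bool) (v : Fin (n - 2)) : Fin n :=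
  if v.val = n - 3 then outChan (lastPair h3) (!b₀) else Fin.castLE (by omega) v

def psiExtra (b₀ : Bool) : Comp n := (outChan (lastPair h3) b₀, lastChan h3)

def psiLayer (b₀ : Bool) (M : Layer (n - 2)) : Layer n :=
  insert (psiExtra h3 b₀) (M.image (relabel (psiChan h3 b₀)))

variable {h3}

lemma outChan_lastPair_val (b : Bool) :
    (outChan (lastPair h3) b).val = if b then n - 2 else n - 3 := by
  cases b <;> rfl

lemma psiChan_val (b₀ : Bool) (v : Fin (n - 2)) :
    (psiChan h3 b₀ v).val = if v.val = n - 3 then (if b₀ then n - 3 else n - 2) else v.val := by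
  unfold psiChan
  split <;> cases b₀ <;> rfl

lemma psiChan_strictMono (b₀ : Bool) : StrictMono (psiChan h3 b₀) := fun v w hvw => by
  rw [Fin.lt_def, psiChan_val, psiChan_val]
  have := w.isLt
  rw [Fin.lt_def] at hvw
  split_ifs <;> omega

lemma lastPair_mem_FLayer (hn : Odd n) : lastPair h3 ∈ FLayer n := by
  obtain ⟨j, rfl⟩ := hn
  exact mem_FLayer.mpr ⟨show (2 * j + 1 - 3) % 2 = 0 by omega, show 2 * j + 1 - 2 = _ by
    simp only [lastPair]; omega⟩

lemma isLayer_psiLayer (b₀ : Bool) {M : Layer (n - 2)} (hM : IsLayer M) :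
    IsLayer (psiLayer h3 b₀ M) := by
  refine ((isLayer_image_relabel_iff (psiChan_strictMono b₀)).mpr hM).insert ?_ ?_
  · rw [Fin.lt_def]
    simp only [psiExtra, lastChan, outChan_lastPair_val]
    split <;> omega
  · simp only [Finset.forall_mem_image, relabel, psiExtra, ne_eq, Fin.ext_iff,
      outChan_lastPair_val, psiChan_val]
    intro c _
    have := c.1.isLt
    have := c.2.isLt
    simp only [lastChan]
    split_ifs <;> omega

lemma bijOn_psiChan_FLayer (hn : Odd n) (b₀ : Bool) :
    Set.BijOn (relabel (psiChan h3 b₀)) (FLayer (n - 2)) ((FLayer n).erase (lastPair h3)) := by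
  obtain ⟨j, rfl⟩ := hn
  refine ⟨fun a ha => ?_, (relabel_injective (psiChan_strictMono b₀).injective).injOn,
    fun c hc => ?_⟩
  · rw [Finset.mem_coe, mem_FLayer] at ha
    have := a.2.isLt
    simp only [Finset.coe_erase, Set.mem_sdiff, Finset.mem_coe, mem_FLayer, relabel, psiChan_val,
      Set.mem_singleton_iff, Prod.ext_iff, Fin.ext_iff, lastPair]
    split_ifs <;> omega
  · simp only [Finset.coe_erase, Set.mem_sdiff, Finset.mem_coe, mem_FLayer,
      Set.mem_singleton_iff, Prod.ext_iff, Fin.ext_iff, lastPair] at hc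
    obtain ⟨⟨he, hs⟩, hne⟩ := hc
    have := c.2.isLt
    refine ⟨(⟨c.1, by omega⟩, ⟨c.2, by omega⟩), mem_FLayer.mpr ⟨he, hs⟩, ?_⟩
    simp only [relabel, Prod.ext_iff, Fin.ext_iff, psiChan_val]
    split_ifs <;> omega

lemma bijOn_psiLayer (b₀ : Bool) (M : Layer (n - 2)) :
    Set.BijOn (relabel (psiChan h3 b₀)) M ((psiLayer h3 b₀ M).erase (psiExtra h3 b₀)) := by
  rw [psiLayer, Finset.erase_insert]
  · exact bijOn_image_relabel (psiChan_strictMono b₀).injective M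
  · simp only [Finset.mem_image, relabel, psiExtra, Prod.ext_iff, Fin.ext_iff, psiChan_val,
      lastChan, not_exists, not_and]
    intro c _ _
    have := c.2.isLt
    split_ifs <;> omega

lemma feeds_lastPair_psiExtra_iff (b₀ b : Bool) :
    Feeds (lastPair h3) (psiExtra h3 b₀) b ↔ b = b₀ := by
  rw [feeds_iff_val]
  simp only [psiExtra, lastChan, outChan_lastPair_val]
  cases b <;> cases b₀ <;> simp <;> omega

lemma feeds_lastPair_psiChan_iff (b₀ b : Bool) {c : Comp (n - 2)} (hc : c.1 < c.2) :
    Feeds (lastPair h3) (relabel (psiChan h3 b₀) c) b ↔ b = !b₀ ∧ c.2.val = n - 2 - 1 := by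
  rw [Fin.lt_def] at hc
  have := c.2.isLt
  rw [feeds_iff_val]
  simp only [relabel, outChan_lastPair_val, psiChan_val]
  cases b <;> cases b₀ <;> simp only [Bool.not_false, Bool.not_true, Bool.false_eq_true,
    ite_true, ite_false] <;> split_ifs <;> simp <;> omega

lemma not_feeds_psiExtra (hn : Odd n) {a : Comp (n - 2)} (ha : a ∈ FLayer (n - 2))
    (b₀ b : Bool) : ¬ Feeds (relabel (psiChan h3 b₀) a) (psiExtra h3 b₀) b := by
  have := outChan_lt_of_mem_FLayer (Nat.Odd.sub_even (by omega) hn even_two) ha b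
  rw [feeds_iff_val, outChan_relabel, psiChan_val]
  simp only [psiExtra, lastChan, outChan_lastPair_val]
  split_ifs <;> omega

noncomputable def psiExtension (hn : Odd n) (b₀ : Bool) {M : Layer (n - 2)} (hM : IsLayer M) :
    Extension (FLayer (n - 2)) M (FLayer n) (psiLayer h3 b₀ M) b₀ where
  first := optionEquivOfBijOn _ (lastPair_mem_FLayer hn) (bijOn_psiChan_FLayer hn b₀)
  second := optionEquivOfBijOn _ (Finset.mem_insert_self _ _) (bijOn_psiLayer b₀ M)
  feeds_iff := by
    have hn₂ : Odd (n - 2) := Nat.Odd.sub_even (by omega) hn even_two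
    rintro (_ | a) (_ | c) b
    · exact feeds_lastPair_psiExtra_iff b₀ b
    · rw [ExtFeeds, fedOnce_FLayer_iff hn₂ (hM.1 c.val c.property)]
      exact feeds_lastPair_psiChan_iff b₀ b (hM.1 c.val c.property)
    · exact iff_false_intro (not_feeds_psiExtra hn a.property b₀ b)
    · exact feeds_relabel_iff (psiChan_strictMono b₀).injective a.val c.val b

end Psi

section Phi

variable {n : ℕ}

def pairBase (v : ℕ) : ℕ := v - v % 2

def partner (v : ℕ) : ℕ := if v % 2 = 0 then v + 1 else v - 1

def fPair (v : Fin n) (hv : v.val + 1 < n) : Comp n :=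
  (⟨pairBase v.val, by unfold pairBase; omega⟩,
    ⟨pairBase v.val + 1, by unfold pairBase; omega⟩)

def skipPair (v : ℕ) (w : Fin (n - 2)) : Fin n :=
  ⟨if w.val < pairBase v then w.val else w.val + 2, by split <;> omega⟩

variable (h3 : 3 ≤ n)

/-- Deleting channel `v` and the last channel: the partner of `v` becomes the free channel
`n - 3`, and the channels above the pair of `v` move down by two. -/
def phiVal (n v x : ℕ) : ℕ :=
  if x = partner v then n - 3 else if x < pairBase v then x else x - 2

def phiChan (v : ℕ) (x : Fin n) : Fin (n - 2) := ⟨min (phiVal n v x.val) (n - 3), by omega⟩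

def phiComp (v : ℕ) (c : Comp n) : Comp (n - 2) := sortComp (relabel (phiChan h3 v) c)

def phiLayer (L : Layer n) (c₀ : Comp n) : Layer (n - 2) :=
  (L.erase c₀).image (phiComp h3 c₀.1.val)

variable {h3} {L : Layer n} {c₀ : Comp n}

lemma channels_of_mem_erase (hL : IsLayer L) (hc₀ : c₀ ∈ L) (hlast : c₀.2.val = n - 1)
    {c : Comp n} (hc : c ∈ L.erase c₀) :
    c.1.val < c.2.val ∧ c.2.val ≤ n - 2 ∧ c.1.val ≠ c₀.1.val ∧
      c.2.val ≠ c₀.1.val := by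
  obtain ⟨hne, hcL⟩ := Finset.mem_erase.mp hc
  obtain ⟨h₁, -, h₃, h₄⟩ := hL.2 c hcL c₀ hc₀ hne
  have := Fin.lt_def.mp (hL.1 c hcL)
  have := c.2.isLt
  simp only [ne_eq, Fin.ext_iff, hlast] at h₁ h₃ h₄
  omega

lemma phiChan_val (v : ℕ) (hv : v ≤ n - 2) {x : Fin n} (hx : x.val ≤ n - 2) :
    (phiChan h3 v x).val = phiVal n v x.val := by
  have : phiVal n v x.val ≤ n - 3 := by unfold phiVal pairBase partner; split_ifs <;> omega
  simp only [phiChan]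
  omega

lemma phiChan_injOn (v : ℕ) (hv : v ≤ n - 2) :
    Set.InjOn (phiChan h3 v) {x | x.val ≤ n - 2 ∧ x.val ≠ v} := by
  rintro x ⟨hx, hxv⟩ y ⟨hy, hyv⟩ h
  have h' := congrArg Fin.val h
  rw [phiChan_val v hv hx, phiChan_val v hv hy] at h'
  unfold phiVal pairBase partner at h'
  exact Fin.ext (by split_ifs at h' <;> omega)

lemma isLayer_phiLayer_and_injOn (hL : IsLayer L) (hc₀ : c₀ ∈ L)
    (hlast : c₀.2.val = n - 1) :
    IsLayer (phiLayer h3 L c₀) ∧ Set.InjOn (phiComp h3 c₀.1.val) (L.erase c₀) := by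
  have hv : c₀.1.val ≤ n - 2 := by have := Fin.lt_def.mp (hL.1 c₀ hc₀); omega
  refine isLayer_image_sortComp_relabel (hL.subset (Finset.erase_subset c₀ L))
    (fun c hc => ?_) (phiChan_injOn c₀.1.val hv)
  have := channels_of_mem_erase hL hc₀ hlast hc
  exact ⟨⟨by omega, this.2.2.1⟩, ⟨this.2.1, this.2.2.2⟩⟩

lemma fPair_mem_FLayer (v : Fin n) (hv : v.val + 1 < n) : fPair v hv ∈ FLayer n :=
  mem_FLayer.mpr ⟨by simp only [fPair, pairBase]; omega, rfl⟩

lemma skipPair_strictMono (v : ℕ) : StrictMono (skipPair (n := n) v) := fun x y hxy => by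
  rw [Fin.lt_def] at hxy ⊢
  simp only [skipPair]
  split_ifs <;> omega

lemma skipPair_val (v : ℕ) (w : Fin (n - 2)) :
    (skipPair v w).val = if w.val < pairBase v then w.val else w.val + 2 := rfl

lemma bijOn_skipPair_FLayer (v : Fin n) (hv : v.val + 1 < n) :
    Set.BijOn (relabel (skipPair (n := n) v.val)) (FLayer (n - 2))
      ((FLayer n).erase (fPair v hv)) := by
  have hb : pairBase v.val % 2 = 0 ∧ pairBase v.val ≤ v.val := by unfold pairBase; omega
  refine ⟨fun a ha => ?_, (relabel_injective (skipPair_strictMono v.val).injective).injOn,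
    fun c hc => ?_⟩
  · rw [Finset.mem_coe, mem_FLayer] at ha
    simp only [Finset.coe_erase, Set.mem_sdiff, Finset.mem_coe, mem_FLayer, relabel,
      skipPair_val, Set.mem_singleton_iff, Prod.ext_iff, Fin.ext_iff, fPair]
    split_ifs <;> omega
  · simp only [Finset.coe_erase, Set.mem_sdiff, Finset.mem_coe, mem_FLayer,
      Set.mem_singleton_iff, Prod.ext_iff, Fin.ext_iff, fPair] at hc
    obtain ⟨⟨he, hs⟩, hne⟩ := hc
    have := c.2.isLt
    by_cases hlt : c.1.val < pairBase v.val
    · refine ⟨(⟨c.1, by omega⟩, ⟨c.2, by omega⟩), mem_FLayer.mpr ⟨he, hs⟩, ?_⟩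
      simp only [relabel, Prod.ext_iff, Fin.ext_iff, skipPair_val]
      split_ifs <;> omega
    · refine ⟨(⟨c.1 - 2, by omega⟩, ⟨c.2 - 2, by omega⟩),
        mem_FLayer.mpr ⟨show (c.1.val - 2) % 2 = 0 by omega, show c.2.val - 2 = _ by
          simp only; omega⟩, ?_⟩
      simp only [relabel, Prod.ext_iff, Fin.ext_iff, skipPair_val]
      split_ifs <;> omega

variable (h3) in
noncomputable def phiSecondEquiv (hL : IsLayer L) (hc₀ : c₀ ∈ L)
    (hlast : c₀.2.val = n - 1) :
    {c // c ∈ L.erase c₀} ≃ {c // c ∈ phiLayer h3 L c₀} :=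
  Set.BijOn.equiv _ <| by
    rw [phiLayer, Finset.coe_image]
    exact (isLayer_phiLayer_and_injOn hL hc₀ hlast).2.bijOn_image

lemma outChan_fPair_val (v : Fin n) (hv : v.val + 1 < n) (b : Bool) :
    (outChan (fPair v hv) b).val = if b then pairBase v.val + 1 else pairBase v.val := by
  cases b <;> rfl

lemma feeds_fPair_self_iff (hn : Odd n) (hv : c₀.1.val + 1 < n) (hlast : c₀.2.val = n - 1)
    (b : Bool) : Feeds (fPair c₀.1 hv) c₀ b ↔ b = decide (c₀.1.val % 2 = 1) := by
  obtain ⟨j, rfl⟩ := hn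
  rw [feeds_iff_val, outChan_fPair_val, hlast]
  unfold pairBase
  cases b <;> simp <;> omega

lemma feeds_fPair_iff (hn : Odd n) (hL : IsLayer L) (hc₀ : c₀ ∈ L)
    (hlast : c₀.2.val = n - 1) (hv : c₀.1.val + 1 < n) {c : Comp n} (hc : c ∈ L.erase c₀)
    (b : Bool) :
    Feeds (fPair c₀.1 hv) c b ↔
      b = !decide (c₀.1.val % 2 = 1) ∧ (phiComp h3 c₀.1.val c).2.val = n - 2 - 1 := by
  obtain ⟨hlt, h₂, hne₁, hne₂⟩ := channels_of_mem_erase hL hc₀ hlast hc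
  obtain ⟨j, rfl⟩ := hn
  rw [feeds_iff_val, outChan_fPair_val, phiComp, (sortComp_val _).2]
  simp only [relabel]
  rw [phiChan_val _ (by omega) (by omega), phiChan_val _ (by omega) (by omega)]
  unfold phiVal partner pairBase
  cases b <;> simp <;> split_ifs <;> omega

lemma not_feeds_skipPair_self (hn : Odd n) (hv : c₀.1.val + 1 < n)
    (hlast : c₀.2.val = n - 1) {a : Comp (n - 2)} (ha : a ∈ FLayer (n - 2)) (b : Bool) :
    ¬ Feeds (relabel (skipPair c₀.1.val) a) c₀ b := by
  have := outChan_lt_of_mem_FLayer (Nat.Odd.sub_even (by omega) hn even_two) ha b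
  rw [feeds_iff_val, outChan_relabel, skipPair_val, hlast]
  unfold pairBase
  split_ifs <;> omega

lemma feeds_skipPair_iff (hL : IsLayer L) (hc₀ : c₀ ∈ L) (hlast : c₀.2.val = n - 1)
    (hn : Odd n) {a : Comp (n - 2)} (ha : a ∈ FLayer (n - 2)) {c : Comp n}
    (hc : c ∈ L.erase c₀) (b : Bool) :
    Feeds (relabel (skipPair c₀.1.val) a) c b ↔ Feeds a (phiComp h3 c₀.1.val c) b := by
  obtain ⟨hlt, h₂, hne₁, hne₂⟩ := channels_of_mem_erase hL hc₀ hlast hc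
  have hv := Fin.lt_def.mp (hL.1 c₀ hc₀)
  have := outChan_lt_of_mem_FLayer (Nat.Odd.sub_even (by omega) hn even_two) ha b
  rw [phiComp, feeds_sortComp_iff, feeds_iff_val, feeds_iff_val, outChan_relabel, skipPair_val]
  simp only [relabel]
  rw [phiChan_val _ (by omega) (by omega), phiChan_val _ (by omega) (by omega)]
  unfold phiVal partner pairBase
  split_ifs <;> omega

lemma val_add_one_lt_of_last (hL : IsLayer L) (hc₀ : c₀ ∈ L) (hlast : c₀.2.val = n - 1) :
    c₀.1.val + 1 < n := by
  have := Fin.lt_def.mp (hL.1 c₀ hc₀)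
  omega

noncomputable def phiExtension (hn : Odd n) (hL : IsLayer L) (hc₀ : c₀ ∈ L)
    (hlast : c₀.2.val = n - 1) :
    Extension (FLayer (n - 2)) (phiLayer h3 L c₀) (FLayer n) L (decide (c₀.1.val % 2 = 1)) where
  first := optionEquivOfBijOn _ (fPair_mem_FLayer c₀.1 (val_add_one_lt_of_last hL hc₀ hlast))
    (bijOn_skipPair_FLayer c₀.1 (val_add_one_lt_of_last hL hc₀ hlast))
  second := (Equiv.optionCongr (phiSecondEquiv h3 hL hc₀ hlast)).symm.trans
    (optionEquivOfBijOn id hc₀ (Set.bijOn_id _))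
  feeds_iff := by
    have hv := val_add_one_lt_of_last hL hc₀ hlast
    have hn₂ : Odd (n - 2) := Nat.Odd.sub_even (by omega) hn even_two
    have hM := (isLayer_phiLayer_and_injOn (h3 := h3) hL hc₀ hlast).1
    have hsome : ∀ c, (Equiv.optionCongr (phiSecondEquiv h3 hL hc₀ hlast)).symm
        (some (phiSecondEquiv h3 hL hc₀ hlast c)) = some c := fun c =>
      (Equiv.symm_apply_eq _).mpr rfl
    rintro (_ | a) (_ | y) b
    · exact feeds_fPair_self_iff hn hv hlast b
    · obtain ⟨c, rfl⟩ := (phiSecondEquiv h3 hL hc₀ hlast).surjective y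
      rw [ExtFeeds, fedOnce_FLayer_iff hn₂ (hM.1 _ (Subtype.property _))]
      simp only [Equiv.trans_apply, hsome, optionEquivOfBijOn_some, optionEquivOfBijOn_none, id]
      exact feeds_fPair_iff hn hL hc₀ hlast hv c.property b
    · exact iff_false_intro (not_feeds_skipPair_self hn hv hlast a.property b)
    · obtain ⟨c, rfl⟩ := (phiSecondEquiv h3 hL hc₀ hlast).surjective y
      simp only [Equiv.trans_apply, hsome, optionEquivOfBijOn_some, id]
      exact feeds_skipPair_iff hL hc₀ hlast hn a.property c.property b

end Phi

section Classes

def graphIsoSetoid (k : ℕ) : Setoid (SecondLayers k) where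
  r L L' := GraphIso ([FLayer k, L.val] : Net k) ([FLayer k, L'.val] : Net k)
  iseqv := ⟨fun _ => GraphIso.refl _, GraphIso.symm, GraphIso.trans⟩

abbrev Classes (k : ℕ) := Quotient (graphIsoSetoid k)

instance (k : ℕ) : Finite (SecondLayers k) := Subtype.finite

variable {n : ℕ}

def castSecond (M : SecondLayers (n - 1)) : SecondLayers n :=
  ⟨castLayer M.val, isLayer_castLayer M.property⟩

def psiSecond (h3 : 3 ≤ n) (b₀ : Bool) (M : SecondLayers (n - 2)) : SecondLayers n :=
  ⟨psiLayer h3 b₀ M.val, isLayer_psiLayer b₀ M.property⟩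

lemma graphIso_castLayer (hn : Odd n) (M : Layer (n - 1)) :
    GraphIso ([FLayer n, castLayer M] : Net n) ([FLayer (n - 1), M] : Net (n - 1)) :=
  (feedIsoCastLayer hn M).graphIso.symm

lemma graphIso_psiLayer_iff (hn : Odd n) (h3 : 3 ≤ n) {b₀ b₀' : Bool} {M M' : Layer (n - 2)}
    (hM : IsLayer M) (hM' : IsLayer M') :
    GraphIso ([FLayer n, psiLayer h3 b₀ M] : Net n) ([FLayer n, psiLayer h3 b₀' M'] : Net n) ↔
      b₀ = b₀' ∧
        GraphIso ([FLayer (n - 2), M] : Net (n - 2)) ([FLayer (n - 2), M'] : Net (n - 2)) := by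
  constructor
  · intro h
    obtain ⟨t⟩ := h.nonempty_feedIso (allFed_FLayer (isLayer_psiLayer b₀ hM))
      (allFed_FLayer (isLayer_psiLayer b₀' hM'))
    obtain ⟨hb, ⟨t'⟩⟩ := (psiExtension hn b₀ hM).descend (psiExtension hn b₀' hM')
      (allFed_FLayer hM) t
    exact ⟨hb, t'.graphIso⟩
  · rintro ⟨rfl, h⟩
    obtain ⟨t⟩ := h.nonempty_feedIso (allFed_FLayer hM) (allFed_FLayer hM')
    exact ((psiExtension hn b₀ hM).lift (psiExtension hn b₀ hM') t).graphIso

/-- `psiLayer` has a comparator with a single input from `F_n`, `castLayer` has none. -/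
lemma not_graphIso_castLayer_psiLayer (hn : Odd n) (h3 : 3 ≤ n) (b₀ : Bool)
    {M : Layer (n - 1)} {M' : Layer (n - 2)} (hM : IsLayer M) (hM' : IsLayer M') :
    ¬ GraphIso ([FLayer n, castLayer M] : Net n) ([FLayer n, psiLayer h3 b₀ M'] : Net n) := by
  intro h
  obtain ⟨t⟩ := h.nonempty_feedIso (allFed_FLayer (isLayer_castLayer hM))
    (allFed_FLayer (isLayer_psiLayer b₀ hM'))
  set v₀ := (psiExtension hn b₀ hM').second none
  have hfed := (t.fedOnce_iff (t.second.symm v₀)).mpr (by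
    rw [Equiv.apply_symm_apply]; exact (psiExtension hn b₀ hM').fedOnce_second_none)
  obtain ⟨c, hc, hcv⟩ := Finset.mem_image.mp (t.second.symm v₀).property
  rw [← hcv, fedOnce_FLayer_iff hn
    ((isLayer_castLayer hM).1 _ (hcv ▸ (t.second.symm v₀).property))] at hfed
  have := c.2.isLt
  simp only [relabel, Fin.val_castLE] at hfed
  omega

noncomputable def classMap (hn : Odd n) (h3 : 3 ≤ n) :
    Classes (n - 1) ⊕ Bool × Classes (n - 2) → Classes n :=
  Sum.elim
    (Quotient.map castSecond fun M M' h =>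
      ((graphIso_castLayer hn M.val).trans h).trans (graphIso_castLayer hn M'.val).symm)
    fun p => Quotient.map (psiSecond h3 p.1)
      (fun M M' h => (graphIso_psiLayer_iff hn h3 M.property M'.property).mpr ⟨rfl, h⟩) p.2

lemma classMap_injective (hn : Odd n) (h3 : 3 ≤ n) : Function.Injective (classMap hn h3) := by
  rintro (q | ⟨b, q⟩) (q' | ⟨b', q'⟩) h <;>
    obtain ⟨M, rfl⟩ := Quotient.exists_rep q <;>
    obtain ⟨M', rfl⟩ := Quotient.exists_rep q' <;>
    replace h := Quotient.exact h
  · exact congrArg Sum.inl (Quotient.sound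
      (((graphIso_castLayer hn M.val).symm.trans h).trans (graphIso_castLayer hn M'.val)))
  · exact (not_graphIso_castLayer_psiLayer hn h3 b' M.property M'.property h).elim
  · exact (not_graphIso_castLayer_psiLayer hn h3 b M'.property M.property h.symm).elim
  · obtain ⟨rfl, hMM'⟩ := (graphIso_psiLayer_iff hn h3 M.property M'.property).mp h
    exact congrArg (fun q => Sum.inr (b, q)) (Quotient.sound hMM')

lemma classMap_surjective (hn : Odd n) (h3 : 3 ≤ n) : Function.Surjective (classMap hn h3) := by
  rintro ⟨L, hL⟩
  by_cases hlast : ∃ c₀ ∈ L, c₀.2.val = n - 1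
  · obtain ⟨c₀, hc₀, hlast⟩ := hlast
    have hM := (isLayer_phiLayer_and_injOn (h3 := h3) hL hc₀ hlast).1
    refine ⟨.inr (decide (c₀.1.val % 2 = 1), ⟦⟨phiLayer h3 L c₀, hM⟩⟧),
      Quotient.sound ?_⟩
    exact ((psiExtension hn _ hM).lift (phiExtension (h3 := h3) hn hL hc₀ hlast)
      (FeedIso.refl _ _)).graphIso
  · push Not at hlast
    obtain ⟨M, hM, rfl⟩ := exists_castLayer_eq hL hlast
    exact ⟨.inl ⟦⟨M, hM⟩⟧, rfl⟩

end Classes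

/-- for odd n ≥ 5,
`|R(G_n)| = |R(G_{n-1})| + 2 |R(G_{n-2})|`. -/
theorem numClasses_recurrence (n : ℕ) (hodd : Odd n) (h5 : 5 ≤ n) :
    numClasses n = numClasses (n - 1) + 2 * numClasses (n - 2) := by
  have h3 : 3 ≤ n := by omega
  have e := Equiv.ofBijective _ ⟨classMap_injective hodd h3, classMap_surjective hodd h3⟩
  change Nat.card (Classes n) = Nat.card (Classes (n - 1)) + 2 * Nat.card (Classes (n - 2))
  rw [← Nat.card_congr e, Nat.card_sum, Nat.card_prod, Nat.card_eq_fintype_card (α := Bool),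
    Fintype.card_bool]

end SN
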